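/- For every integer N ≥ 2 and every integer ℓ ≥ 1, the number 2^{ℓ} · p_ℓ^{(N)} is an integer; that is, p_ℓ^{(N)} is a rational number whose denominator is a power of 2 with exponent at most ℓ. -/

import Mathlib

/-!
Write `f θ = sin θ (2 cos θ)^(ℓ-1)`, so that `2^ℓ p_ℓ = (2/N) ∑_k (-1)^k f(θ_k)`. Repeated
product-to-sum shows that `f` is an integer combination of the functions `θ ↦ sin (r θ)`, `r ∈ ℤ`.
For each of these, multiplying `∑_k (-1)^k sin (r θ_k)` by `2 cos (r π / 2N)` telescopes to
`± sin (r π) = 0`; so the sum vanishes unless `cos (r π / 2N) = 0`, and then every term equals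
`sin (r π / 2N) = ±1`. Either way the alternating sum is an integer multiple of `N`.
-/

/-- The probability numbers `p_ℓ^{(N)}`:  `p_0^{(N)} = 0` and for `ℓ ≥ 1`,
`p_ℓ^{(N)} = (1/N) ∑_{k=1}^{N} (-1)^{k+1} sin θ_k cos^{ℓ-1} θ_k` with `θ_k = (2k-1)π/(2N)`. -/
noncomputable def probNum (N ℓ : ℕ) : ℝ :=
  if ℓ = 0 then 0 else
    (1 / N) * ∑ k ∈ Finset.range N,
      (-1 : ℝ) ^ k * Real.sin ((2 * k + 1) * Real.pi / (2 * N)) *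
        Real.cos ((2 * k + 1) * Real.pi / (2 * N)) ^ (ℓ - 1)

open Real Finset

def intSinPoly : AddSubgroup (ℝ → ℝ) :=
  AddSubgroup.closure (Set.range fun (r : ℤ) (θ : ℝ) => sin (r * θ))

lemma sin_int_mul_mem_intSinPoly (r : ℤ) : (fun θ : ℝ => sin (r * θ)) ∈ intSinPoly :=
  AddSubgroup.subset_closure ⟨r, rfl⟩

lemma two_cos_mul_mem_intSinPoly {f : ℝ → ℝ} (hf : f ∈ intSinPoly) :
    (fun θ => 2 * cos θ * f θ) ∈ intSinPoly := by
  suffices intSinPoly ≤ intSinPoly.comap (AddMonoidHom.mulLeft fun θ => 2 * cos θ) from this hf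
  refine (AddSubgroup.closure_le _).mpr (Set.range_subset_iff.mpr fun r => ?_)
  have h : (fun θ : ℝ => 2 * cos θ * sin (r * θ)) =
      (fun θ : ℝ => sin (((r + 1 : ℤ) : ℝ) * θ)) + fun θ : ℝ => sin (((r - 1 : ℤ) : ℝ) * θ) := by
    ext θ
    simp only [Pi.add_apply, Int.cast_add, Int.cast_sub, Int.cast_one]
    rw [mul_right_comm, two_mul_sin_mul_cos, add_mul, sub_mul, one_mul, add_comm]
  show (fun θ : ℝ => 2 * cos θ * sin (r * θ)) ∈ intSinPoly
  rw [h]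
  exact add_mem (sin_int_mul_mem_intSinPoly _) (sin_int_mul_mem_intSinPoly _)

lemma sin_mul_two_cos_pow_mem_intSinPoly (n : ℕ) :
    (fun θ => sin θ * (2 * cos θ) ^ n) ∈ intSinPoly := by
  induction n with
  | zero => simpa using sin_int_mul_mem_intSinPoly 1
  | succ n ih =>
    convert two_cos_mul_mem_intSinPoly ih using 2
    ring

lemma two_mul_cos_mul_sum_neg_one_pow_mul_sin (α : ℝ) (N : ℕ) :
    2 * cos α * ∑ k ∈ range N, (-1) ^ k * sin ((2 * k + 1) * α) =
      -((-1) ^ N * sin (2 * N * α)) := by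
  have hterm : ∀ k : ℕ, 2 * cos α * ((-1) ^ k * sin ((2 * k + 1) * α)) =
      (-1) ^ k * sin (2 * k * α) - (-1) ^ (k + 1) * sin (2 * (k + 1 : ℕ) * α) := by
    intro k
    have h := two_mul_sin_mul_cos ((2 * k + 1) * α) α
    rw [show (2 * k + 1) * α - α = 2 * k * α by ring,
      show (2 * k + 1) * α + α = 2 * (k + 1 : ℕ) * α by push_cast; ring] at h
    rw [pow_succ]
    linear_combination (-1) ^ k * h
  rw [mul_sum, sum_congr rfl fun k _ => hterm k, sum_range_sub']
  simp

lemma sin_odd_mul_of_cos_eq_zero {α : ℝ} (h : cos α = 0) (k : ℕ) :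
    sin ((2 * k + 1) * α) = (-1) ^ k * sin α := by
  induction k with
  | zero => simp
  | succ k ih =>
    have hsin2 : sin (2 * α) = 0 := by rw [sin_two_mul, h, mul_zero]
    have hcos2 : cos (2 * α) = -1 := by rw [cos_two_mul, h]; norm_num
    rw [show (2 * ((k + 1 : ℕ) : ℝ) + 1) * α = (2 * k + 1) * α + 2 * α by push_cast; ring,
      sin_add, hsin2, hcos2, ih]
    ring

lemma sum_neg_one_pow_mul_sin_int_mul_mem_zmultiples (N : ℕ) (r : ℤ) :
    ∑ k ∈ range N, (-1) ^ k * sin (r * ((2 * k + 1) * π / (2 * N))) ∈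
      AddSubgroup.zmultiples (N : ℝ) := by
  rcases N.eq_zero_or_pos with rfl | hN
  · simp
  set α := r * π / (2 * N)
  have hα : ∀ k : ℕ, r * ((2 * k + 1) * π / (2 * N)) = (2 * k + 1) * α := fun k => by
    simp only [α]; ring
  simp only [hα]
  by_cases hcos : cos α = 0
  · have hsum : ∑ k ∈ range N, (-1) ^ k * sin ((2 * k + 1) * α) = N * sin α := by
      simp [sin_odd_mul_of_cos_eq_zero hcos, ← mul_assoc, ← pow_add, ← two_mul, pow_mul]
    have hsin : sin α ^ 2 = 1 := by nlinarith [sin_sq_add_cos_sq α]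
    rcases sq_eq_one_iff.mp hsin with h | h
    · exact ⟨1, by simp [hsum, h]⟩
    · exact ⟨-1, by simp [hsum, h]⟩
  · have h := two_mul_cos_mul_sum_neg_one_pow_mul_sin α N
    have hπ : 2 * (N : ℝ) * α = r * π := by simp only [α]; field_simp
    rw [hπ, sin_int_mul_pi, mul_zero, neg_zero] at h
    rw [(mul_eq_zero.mp h).resolve_left (by simpa using hcos)]
    exact zero_mem _

lemma sum_neg_one_pow_mul_mem_zmultiples_of_mem_intSinPoly (N : ℕ) {f : ℝ → ℝ}
    (hf : f ∈ intSinPoly) :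
    ∑ k ∈ range N, (-1) ^ k * f ((2 * k + 1) * π / (2 * N)) ∈
      AddSubgroup.zmultiples (N : ℝ) := by
  let L : (ℝ → ℝ) →+ ℝ := AddMonoidHom.mk'
    (fun f => ∑ k ∈ range N, (-1) ^ k * f ((2 * k + 1) * π / (2 * N)))
    (fun f g => by simp only [Pi.add_apply, mul_add, sum_add_distrib])
  suffices intSinPoly ≤ (AddSubgroup.zmultiples (N : ℝ)).comap L from this hf
  exact (AddSubgroup.closure_le _).mpr (Set.range_subset_iff.mpr
    (sum_neg_one_pow_mul_sin_int_mul_mem_zmultiples N))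

theorem two_pow_mul_probNum_isInt_general (N ℓ : ℕ) :
    ∃ m : ℤ, (2 : ℝ) ^ ℓ * probNum N ℓ = (m : ℝ) := by
  rcases ℓ with _ | n
  · exact ⟨0, by simp [probNum]⟩
  rcases N.eq_zero_or_pos with rfl | hN
  · exact ⟨0, by simp [probNum]⟩
  obtain ⟨m, hm⟩ := AddSubgroup.mem_zmultiples_iff.mp
    (sum_neg_one_pow_mul_mem_zmultiples_of_mem_intSinPoly N
      (sin_mul_two_cos_pow_mem_intSinPoly n))
  refine ⟨2 * m, ?_⟩
  rw [zsmul_eq_mul] at hm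
  rw [probNum, if_neg n.succ_ne_zero, Nat.add_sub_cancel]
  have hN' : (N : ℝ) ≠ 0 := by positivity
  calc _ = 2 / (N : ℝ) * (m * N) := by
        rw [hm, mul_sum, mul_sum, mul_sum]
        exact sum_congr rfl fun k _ => by ring
    _ = ((2 * m : ℤ) : ℝ) := by push_cast; field_simp

/-- `2^ℓ p_ℓ^{(N)}` is an integer. -/
theorem two_pow_mul_probNum_isInt (N ℓ : ℕ) (hN : 2 ≤ N) (hℓ : 1 ≤ ℓ) :
    ∃ m : ℤ, (2 : ℝ) ^ ℓ * probNum N ℓ = (m : ℝ) :=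
  two_pow_mul_probNum_isInt_general N ℓ
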